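/- Superposition of strategies in an MDP: given two strategies σ₁, σ₂ in an MDP M and α ∈ [0,1], there exists a strategy σ whose outcome sequence of distributions satisfies M^σ_i = α · M^{σ₁}_i + (1−α) · M^{σ₂}_i for every round i; explicitly, σ(ρ)(a) = (α·Pr^{σ₁}(Cyl(ρ))·σ₁(ρ)(a) + (1−α)·Pr^{σ₂}(Cyl(ρ))·σ₂(ρ)(a)) / (α·Pr^{σ₁}(Cyl(ρ)) + (1−α)·Pr^{σ₂}(Cyl(ρ))) whenever the denominator is positive. -/

import Mathlib

open Finset

/-- A Markov decision process: transition kernel `δ q a q'`. -/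
structure MDP (Q A : Type) where
  δ : Q → A → Q → ℝ

/-- Validity of the transition kernel. -/
def IsMDP {Q A : Type} [Fintype Q] (M : MDP Q A) : Prop :=
  (∀ q a q', 0 ≤ M.δ q a q') ∧ (∀ q a, (∑ q' : Q, M.δ q a q') = 1)

/-- A probability distribution over a finite set. -/
def IsDist {Q : Type} [Fintype Q] (d : Q → ℝ) : Prop :=
  (∀ q, 0 ≤ d q) ∧ (∑ q : Q, d q) = 1

/-- Randomized strategies: map (reversed) state histories to distributions on actions. -/
abbrev StratM (Q A : Type) := List Q → A → ℝ

def IsStratM {Q A : Type} [Fintype A] (σ : StratM Q A) : Prop :=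
  ∀ h, (∀ a, 0 ≤ σ h a) ∧ (∑ a : A, σ h a) = 1

/-- Probability `Pr^σ(Cyl(ρ))` of a finite state history `ρ` (in reverse chronological
order: the head is the current state), with the actions marginalized out. -/
def hprobM {Q A : Type} [Fintype A] (M : MDP Q A) (d0 : Q → ℝ)
    (σ : StratM Q A) : List Q → ℝ
  | [] => 1
  | [q] => d0 q
  | q :: q' :: h =>
      (∑ a : A, σ (q' :: h) a * M.δ q' a q) * hprobM M d0 σ (q' :: h)

/-- The outcome sequence of distributions `M^σ_i`. -/
def outSeqM {Q A : Type} [Fintype Q] [Fintype A] (M : MDP Q A) (d0 : Q → ℝ)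
    (σ : StratM Q A) (i : ℕ) (q : Q) : ℝ :=
  ∑ h : Fin i → Q, hprobM M d0 σ (q :: (List.ofFn h).reverse)

/-!
At each history `ρ`, play `σ₁` and `σ₂` with odds `α · Pr^{σ₁}(ρ) : (1 - α) · Pr^{σ₂}(ρ)`.
Since `(w₁ + w₂) · mix = w₁ · σ₁ + w₂ · σ₂` holds for nonnegative weights, even when both
vanish, the history probabilities of the mixed strategy obey the same one-step recursion as
`α · Pr^{σ₁} + (1 - α) · Pr^{σ₂}`, so the two agree on every history; summing over the
histories of length `i` gives the outcome sequences.
-/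

section Mixture

variable {A : Type}

noncomputable def mixture (w₁ w₂ : ℝ) (p₁ p₂ : A → ℝ) (a : A) : ℝ :=
  if 0 < w₁ + w₂ then (w₁ * p₁ a + w₂ * p₂ a) / (w₁ + w₂) else p₁ a

variable {w₁ w₂ : ℝ} {p₁ p₂ : A → ℝ}

theorem mixture_of_pos (h : 0 < w₁ + w₂) (a : A) :
    mixture w₁ w₂ p₁ p₂ a = (w₁ * p₁ a + w₂ * p₂ a) / (w₁ + w₂) :=
  if_pos h

theorem add_mul_mixture (hw₁ : 0 ≤ w₁) (hw₂ : 0 ≤ w₂) (a : A) :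
    (w₁ + w₂) * mixture w₁ w₂ p₁ p₂ a = w₁ * p₁ a + w₂ * p₂ a := by
  rcases (add_nonneg hw₁ hw₂).lt_or_eq with hpos | hzero
  · rw [mixture_of_pos hpos, mul_div_cancel₀ _ hpos.ne']
  · obtain ⟨rfl, rfl⟩ : w₁ = 0 ∧ w₂ = 0 := by constructor <;> linarith
    simp

theorem mixture_nonneg (hw₁ : 0 ≤ w₁) (hw₂ : 0 ≤ w₂) (hp₁ : ∀ a, 0 ≤ p₁ a)
    (hp₂ : ∀ a, 0 ≤ p₂ a) (a : A) : 0 ≤ mixture w₁ w₂ p₁ p₂ a := by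
  unfold mixture
  split_ifs with hpos
  · exact div_nonneg (by have := hp₁ a; have := hp₂ a; positivity) hpos.le
  · exact hp₁ a

theorem sum_mixture [Fintype A] (hp₁ : ∑ a, p₁ a = 1) (hp₂ : ∑ a, p₂ a = 1) :
    ∑ a, mixture w₁ w₂ p₁ p₂ a = 1 := by
  by_cases hpos : 0 < w₁ + w₂
  · simp only [mixture_of_pos hpos, ← sum_div, sum_add_distrib, ← mul_sum, hp₁, hp₂,
      mul_one, div_self hpos.ne']
  · simpa [mixture, hpos] using hp₁

end Mixture

section Superposition

variable {Q A : Type} [Fintype A] (M : MDP Q A) (d0 : Q → ℝ)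

theorem hprobM_cons_cons (σ : StratM Q A) (q q' : Q) (h : List Q) :
    hprobM M d0 σ (q :: q' :: h) =
      (∑ a, σ (q' :: h) a * M.δ q' a q) * hprobM M d0 σ (q' :: h) :=
  rfl

variable {M d0}

theorem hprobM_nonneg (hδ : ∀ q a q', 0 ≤ M.δ q a q') (hd0 : ∀ q, 0 ≤ d0 q)
    {σ : StratM Q A} (hσ : ∀ h a, 0 ≤ σ h a) : ∀ ρ, 0 ≤ hprobM M d0 σ ρ
  | [] => zero_le_one
  | [q] => hd0 q
  | q :: q' :: h => by
    rw [hprobM_cons_cons]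
    exact mul_nonneg (sum_nonneg fun a _ => mul_nonneg (hσ _ a) (hδ q' a q))
      (hprobM_nonneg hδ hd0 hσ (q' :: h))

variable (M d0)

noncomputable def superposeStrat (σ₁ σ₂ : StratM Q A) (α : ℝ) : StratM Q A := fun ρ =>
  mixture (α * hprobM M d0 σ₁ ρ) ((1 - α) * hprobM M d0 σ₂ ρ) (σ₁ ρ) (σ₂ ρ)

variable {M d0} {σ₁ σ₂ : StratM Q A} {α : ℝ}

theorem hprobM_superposeStrat (hδ : ∀ q a q', 0 ≤ M.δ q a q') (hd0 : ∀ q, 0 ≤ d0 q)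
    (h₁ : ∀ h a, 0 ≤ σ₁ h a) (h₂ : ∀ h a, 0 ≤ σ₂ h a) (hα0 : 0 ≤ α) (hα1 : α ≤ 1) :
    ∀ ρ, hprobM M d0 (superposeStrat M d0 σ₁ σ₂ α) ρ =
      α * hprobM M d0 σ₁ ρ + (1 - α) * hprobM M d0 σ₂ ρ
  | [] => by simp [hprobM]
  | [q] => by simp only [hprobM]; ring
  | q :: q' :: h => by
    set ρ := q' :: h
    have hw₁ : 0 ≤ α * hprobM M d0 σ₁ ρ := mul_nonneg hα0 (hprobM_nonneg hδ hd0 h₁ ρ)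
    have hw₂ : 0 ≤ (1 - α) * hprobM M d0 σ₂ ρ :=
      mul_nonneg (sub_nonneg.2 hα1) (hprobM_nonneg hδ hd0 h₂ ρ)
    rw [hprobM_cons_cons, hprobM_superposeStrat hδ hd0 h₁ h₂ hα0 hα1 ρ, sum_mul,
      hprobM_cons_cons, hprobM_cons_cons, sum_mul, sum_mul, mul_sum, mul_sum,
      ← sum_add_distrib]
    refine sum_congr rfl fun a _ => ?_
    have := add_mul_mixture (p₁ := σ₁ ρ) (p₂ := σ₂ ρ) hw₁ hw₂ a
    simp only [superposeStrat]
    linear_combination M.δ q' a q * this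

theorem isStratM_superposeStrat (hδ : ∀ q a q', 0 ≤ M.δ q a q') (hd0 : ∀ q, 0 ≤ d0 q)
    (h₁ : IsStratM σ₁) (h₂ : IsStratM σ₂) (hα0 : 0 ≤ α) (hα1 : α ≤ 1) :
    IsStratM (superposeStrat M d0 σ₁ σ₂ α) := fun ρ =>
  ⟨mixture_nonneg (mul_nonneg hα0 (hprobM_nonneg hδ hd0 (fun h => (h₁ h).1) ρ))
      (mul_nonneg (sub_nonneg.2 hα1) (hprobM_nonneg hδ hd0 (fun h => (h₂ h).1) ρ))
      (h₁ ρ).1 (h₂ ρ).1,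
    sum_mixture (h₁ ρ).2 (h₂ ρ).2⟩

end Superposition

/-- superposition of strategies in an MDP. For strategies `σ₁, σ₂` and
`α ∈ [0,1]` there is a strategy `σ` whose outcome sequence is the pointwise
superposition `α·M^{σ₁} + (1-α)·M^{σ₂}`, and which is given explicitly by the stated
formula whenever the denominator is positive. -/
theorem superposition_of_strategies {Q A : Type} [Fintype Q] [Fintype A]
    (M : MDP Q A) (hM : IsMDP M) (d0 : Q → ℝ) (hd0 : IsDist d0)
    (σ₁ σ₂ : StratM Q A) (h₁ : IsStratM σ₁) (h₂ : IsStratM σ₂)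
    (α : ℝ) (hα0 : 0 ≤ α) (hα1 : α ≤ 1) :
    ∃ σ : StratM Q A, IsStratM σ ∧
      (∀ i q, outSeqM M d0 σ i q =
        α * outSeqM M d0 σ₁ i q + (1 - α) * outSeqM M d0 σ₂ i q) ∧
      (∀ (ρ : List Q) (a : A),
        0 < α * hprobM M d0 σ₁ ρ + (1 - α) * hprobM M d0 σ₂ ρ →
        σ ρ a =
          (α * hprobM M d0 σ₁ ρ * σ₁ ρ a + (1 - α) * hprobM M d0 σ₂ ρ * σ₂ ρ a) /
            (α * hprobM M d0 σ₁ ρ + (1 - α) * hprobM M d0 σ₂ ρ)) := by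
  have hprob := hprobM_superposeStrat hM.1 hd0.1 (fun h => (h₁ h).1) (fun h => (h₂ h).1)
    hα0 hα1
  refine ⟨superposeStrat M d0 σ₁ σ₂ α, isStratM_superposeStrat hM.1 hd0.1 h₁ h₂ hα0 hα1,
    fun i q => ?_, fun ρ a hpos => mixture_of_pos hpos a⟩
  simp only [outSeqM, hprob, sum_add_distrib, mul_sum]
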